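/- Let n ≥ 1 and let Δ = {x : Fin n → ℝ | (∀ i, x i ≥ 0) ∧ ∑ i, x i = 1} be the standard simplex on n vertices, and let ∂Δ = {x ∈ Δ | ∃ i, x i = 0} be its boundary, i.e., the union of the geometric realizations of the proper faces of Δ. There is no continuous map f : Δ → ∂Δ that maps each proper face into itself, i.e., no continuous f : Δ → Fin n → ℝ such that: (a) f(x) ∈ Δ for all x ∈ Δ; (b) for every x ∈ Δ there exists i with f(x) i = 0; and (c) for every x ∈ Δ and every i ∈ Fin n, x i = 0 implies f(x) i = 0. -/

import Mathlib

/-!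
A face-preserving `f : Δ → ∂Δ` composed with the cyclic shift of coordinates,
`g x i = f x (i + 1)`, is a self-map of `Δ`, so by Brouwer's theorem it has a fixed point `x`.
Then `x i = f x (i + 1)`, and since `f` preserves faces, `f x (i + 1) = 0` forces `x i = 0` and
hence `f x i = 0`: the zero coordinate of `f x` spreads around the cycle and `f x = 0`,
contradicting `∑ i, f x i = 1`.

Brouwer's theorem on `Δ` follows from the one on the cube `[0, 1]ⁿ` through a retraction onto
`Δ`. On the cube it is proved combinatorially: subdivide `{0, …, p}ⁿ` into Kuhn's simplices and
label each grid point by the first coordinate that `g` does not decrease (or `n` if there is none).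
This is a Sperner labelling, so by the door-to-door parity argument, by induction on `n`, some
small simplex carries all labels; letting `p → ∞`, compactness gives a point lying in every
label set, which is a fixed point.
-/

open Finset

theorem Finset.card_modEq_card_filter_eq_self {α : Type*} [DecidableEq α] (s : Finset α)
    (f : α → α) (hf : ∀ a ∈ s, f a ∈ s) (hff : ∀ a ∈ s, f (f a) = a) :
    #s ≡ #{a ∈ s | f a = a} [MOD 2] := by
  let g : Function.End s := fun a => ⟨f a, hf a a.2⟩
  have hg : g ^ 2 ^ 1 = 1 := funext fun a => Subtype.ext (hff a a.2)
  have := Equiv.Perm.card_fixedPoints_modEq (p := 2) hg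
  rw [Fintype.card_coe] at this
  convert this using 1
  rw [← Fintype.card_coe]
  exact Fintype.card_congr
    { toFun a := ⟨⟨a, (mem_filter.1 a.2).1⟩, Subtype.ext (mem_filter.1 a.2).2⟩
      invFun a := ⟨a.1, mem_filter.2 ⟨a.1.2, congrArg Subtype.val a.2⟩⟩ }

section Doors

variable {n : ℕ} (L : Fin (n + 1) → ℕ)

theorem image_compl_singleton_eq_of_apply_eq {j k : Fin (n + 1)} (h : L k = L j) :
    ({k}ᶜ : Finset _).image L = ({j}ᶜ : Finset _).image L := by
  ext v
  simp only [mem_image, mem_compl, mem_singleton]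
  constructor <;> rintro ⟨t, ht, rfl⟩
  · by_cases htj : t = j
    · exact ⟨k, fun hkj => ht (htj.trans hkj.symm), by rw [h, htj]⟩
    · exact ⟨t, htj, rfl⟩
  · by_cases htk : t = k
    · exact ⟨j, fun hjk => ht (htk.trans hjk.symm), by rw [← h, htk]⟩
    · exact ⟨t, htk, rfl⟩

variable {L}

theorem injOn_compl_singleton_of_image_eq_range {j : Fin (n + 1)}
    (hj : ({j}ᶜ : Finset _).image L = range n) : Set.InjOn L ({j}ᶜ : Finset _) := by
  rw [← card_image_iff, hj, card_range, card_compl, card_singleton, Fintype.card_fin,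
    Nat.add_sub_cancel]

theorem image_compl_singleton_eq_range_iff {j k : Fin (n + 1)}
    (hj : ({j}ᶜ : Finset _).image L = range n) :
    ({k}ᶜ : Finset _).image L = range n ↔ L k = L j := by
  refine ⟨fun hk => ?_, fun h => by rw [image_compl_singleton_eq_of_apply_eq L h, hj]⟩
  by_contra hne
  have hkj : k ≠ j := fun h => hne (h ▸ rfl)
  obtain ⟨t, ht, htj⟩ := mem_image.1 <| show L j ∈ ({j}ᶜ : Finset _).image L by
    rw [hj, ← hk]; exact mem_image_of_mem L (by simpa using hkj.symm)
  have htk : t ≠ k := fun h => hne (h ▸ htj)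
  exact (mem_compl.1 ht) (mem_singleton.2 <| injOn_compl_singleton_of_image_eq_range hk
    (by simpa using htk) (by simpa using hkj.symm) htj)

theorem card_fiber_of_image_eq_range (hL : ∀ j, L j ≤ n) {j : Fin (n + 1)}
    (hj : ({j}ᶜ : Finset _).image L = range n) :
    #{k | L k = L j} = if L j = n then 1 else 2 := by
  split_ifs with hjn
  · rw [card_eq_one]
    refine ⟨j, eq_singleton_iff_unique_mem.2 ⟨by simp, fun k hk => ?_⟩⟩
    by_contra hkj
    have : L k ∈ range n := hj ▸ mem_image_of_mem L (by simpa using hkj)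
    simp_all
  · obtain ⟨j', hj', hj'j⟩ := mem_image.1 <| show L j ∈ ({j}ᶜ : Finset _).image L by
      rw [hj, mem_range]; exact lt_of_le_of_ne (hL j) hjn
    rw [card_eq_two]
    refine ⟨j, j', fun h => by simp_all, ?_⟩
    ext k
    simp only [mem_filter, mem_univ, true_and, mem_insert, mem_singleton]
    refine ⟨fun hk => ?_, by rintro (rfl | rfl) <;> simp [hj'j]⟩
    by_contra! hkne
    exact hkne.2 (injOn_compl_singleton_of_image_eq_range hj (by simpa using hkne.1) hj'
      (hk.trans hj'j.symm))

theorem odd_card_filter_image_compl_eq_range_iff (hL : ∀ j, L j ≤ n) :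
    Odd #{j | ({j}ᶜ : Finset _).image L = range n} ↔ univ.image L = range (n + 1) := by
  by_cases hdoor : ∃ j, ({j}ᶜ : Finset _).image L = range n
  · obtain ⟨j, hj⟩ := hdoor
    have hdoors : ({j | ({j}ᶜ : Finset _).image L = range n} : Finset (Fin (n + 1))) =
        ({k | L k = L j} : Finset _) :=
      filter_congr fun k _ => image_compl_singleton_eq_range_iff hj
    have himage : univ.image L = insert (L j) (range n) := by
      rw [← hj, ← image_insert, insert_compl_self]
    rw [hdoors, card_fiber_of_image_eq_range hL hj, himage]
    split_ifs with hjn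
    · simp [hjn, range_add_one]
    · have hjn : L j < n := lt_of_le_of_ne (hL j) hjn
      rw [insert_eq_of_mem (mem_range.2 hjn)]
      exact iff_of_false (by decide) fun h => by simpa using congrArg card h
  · push Not at hdoor
    rw [filter_false_of_mem fun j _ => hdoor j, card_empty]
    refine ⟨fun h => absurd h (by decide), fun himage => ?_⟩
    have hinj : Function.Injective L := by
      rw [← Set.injOn_univ, ← coe_univ, ← card_image_iff, himage, card_range, card_univ,
        Fintype.card_fin]
    obtain ⟨j, -, hjn⟩ := mem_image.1 (himage ▸ self_mem_range_succ n)
    refine absurd ?_ (hdoor j)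
    rw [compl_singleton, image_erase hinj, himage, hjn, range_add_one,
      erase_insert notMem_range_self]

end Doors

theorem Equiv.optionCongr_removeNone {α : Type*} [DecidableEq α] {τ : Equiv.Perm (Option α)}
    (h : τ none = none) : (removeNone τ).optionCongr = τ := by
  simpa only [Equiv.Perm.decomposeOption_apply, Equiv.Perm.decomposeOption_symm_apply, h,
    Equiv.swap_self, ← Equiv.Perm.one_def, one_mul] using
    Equiv.Perm.decomposeOption.symm_apply_apply τ

theorem Fin.forall_of_imp_of_add_one {n : ℕ} [NeZero n] {P : Fin n → Prop}
    (h : ∀ i, P (i + 1) → P i) {i₀ : Fin n} (h₀ : P i₀) (i : Fin n) : P i := by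
  suffices ∀ k : ℕ, ∀ i, ((i₀ - i : Fin n) : ℕ) = k → P i from this _ i rfl
  intro k
  induction k with
  | zero => exact fun i hi => (sub_eq_zero.1 (Fin.ext hi)) ▸ h₀
  | succ k ih =>
    refine fun i hi => h i (ih _ ?_)
    rw [← sub_sub, Fin.val_sub_one_of_ne_zero fun h => by simp [h] at hi, hi,
      Nat.add_sub_cancel]

def firstIndex {n : ℕ} (P : Fin n → Prop) [DecidablePred P] : Fin (n + 1) :=
  Fin.find (fun c => c = Fin.last n ∨ ∃ i : Fin n, i.castSucc = c ∧ P i) ⟨_, Or.inl rfl⟩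

section firstIndex

variable {n : ℕ} {P : Fin n → Prop} [DecidablePred P]

theorem firstIndex_le {i : Fin n} (h : P i) : firstIndex P ≤ i.castSucc :=
  Fin.find_le_of_pos _ (Or.inr ⟨i, rfl, h⟩)

theorem apply_of_firstIndex_eq {i : Fin n} (h : firstIndex P = i.castSucc) : P i := by
  have hspec : firstIndex P = Fin.last n ∨ ∃ i', i'.castSucc = firstIndex P ∧ P i' :=
    Fin.find_spec (p := fun c => c = Fin.last n ∨ ∃ i : Fin n, i.castSucc = c ∧ P i) _
  obtain h' | ⟨i', hi', hP⟩ := h ▸ hspec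
  · exact absurd h' (Fin.castSucc_lt_last i).ne
  · exact Fin.castSucc_injective n hi' ▸ hP

theorem not_apply_of_firstIndex_eq_last (h : firstIndex P = Fin.last n) (i : Fin n) : ¬P i :=
  fun hi => (firstIndex_le hi).not_gt (h ▸ Fin.castSucc_lt_last i)

end firstIndex

open Metric in
theorem IsCompact.exists_forall_mem_of_forall_exists_dist_le {X ι : Type*}
    [PseudoMetricSpace X] [Fintype ι] {K : Set X} (hK : IsCompact K) {F : ι → Set X}
    (hF : ∀ i, IsClosed (F i))
    (h : ∀ ε > 0, ∃ x ∈ K, ∀ i, ∃ y ∈ F i, dist x y ≤ ε) :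
    ∃ x ∈ K, ∀ i, x ∈ F i := by
  obtain ⟨x₀, hx₀, hF₀⟩ := h 1 one_pos
  let φ : X → ℝ := fun x => ∑ i, infDist x (F i)
  obtain ⟨x, hxK, hmin⟩ := hK.exists_isMinOn ⟨x₀, hx₀⟩
    (continuous_finsetSum _ fun i _ => continuous_infDist_pt (F i)).continuousOn
  have hφ : φ x ≤ 0 := by
    refine le_of_forall_pos_le_add fun ε hε => ?_
    obtain ⟨y, hyK, hy⟩ := h (ε / (Fintype.card ι + 1)) (by positivity)
    calc φ x ≤ φ y := hmin hyK
      _ ≤ ∑ _i : ι, ε / (Fintype.card ι + 1) := sum_le_sum fun i _ =>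
          let ⟨z, hz, hyz⟩ := hy i; (infDist_le_dist_of_mem hz).trans hyz
      _ ≤ 0 + ε := by
          rw [sum_const, card_univ, nsmul_eq_mul, zero_add, mul_div_assoc',
            div_le_iff₀ (by positivity)]
          nlinarith
  refine ⟨x, hxK, fun i => ((hF i).mem_iff_infDist_zero ?_).2 ?_⟩
  · obtain ⟨y, hy, -⟩ := hF₀ i
    exact ⟨y, hy⟩
  · exact le_antisymm ((single_le_sum (fun j _ => infDist_nonneg) (mem_univ i)).trans hφ)
      infDist_nonneg

namespace Kuhn

abbrev Room (n : ℕ) := (Fin n → ℕ) × Equiv.Perm (Fin n)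

/-- The room `(b, π)` of Kuhn's triangulation is the simplex with vertices
`b, b + e (π 0), b + e (π 0) + e (π 1), …`. -/
def vertex {n : ℕ} (R : Room n) (j : Fin (n + 1)) (i : Fin n) : ℕ :=
  R.1 i + if (R.2⁻¹ i).castSucc < j then 1 else 0

def rooms (p n : ℕ) : Finset (Room n) :=
  Fintype.piFinset (fun _ => range p) ×ˢ univ

variable {p n k : ℕ}

theorem mem_rooms {R : Room n} : R ∈ rooms p n ↔ ∀ i, R.1 i < p := by
  simp [rooms]

theorem vertex_le {R : Room n} (hR : R ∈ rooms p n) (j : Fin (n + 1)) (i : Fin n) :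
    vertex R j i ≤ p := by
  have := mem_rooms.1 hR i
  unfold vertex
  split <;> omega

def rotate (R : Room (k + 1)) : Room (k + 1) :=
  (R.1 + Pi.single (R.2 0) 1, R.2 * finRotate (k + 1))

def unrotate (R : Room (k + 1)) : Room (k + 1) :=
  (R.1 - Pi.single (R.2 (Fin.last k)) 1, R.2 * (finRotate (k + 1))⁻¹)

theorem rotate_snd_last (R : Room (k + 1)) : (rotate R).2 (Fin.last k) = R.2 0 := by
  simp [rotate]

theorem rotate_fst_self (R : Room (k + 1)) : (rotate R).1 (R.2 0) = R.1 (R.2 0) + 1 := by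
  simp [rotate]

theorem unrotate_snd_zero (R : Room (k + 1)) : (unrotate R).2 0 = R.2 (Fin.last k) := by
  simp only [unrotate, Equiv.Perm.mul_apply, Equiv.Perm.inv_eq_iff_eq.2 (finRotate_last).symm]

theorem unrotate_fst_self (R : Room (k + 1)) :
    (unrotate R).1 (R.2 (Fin.last k)) = R.1 (R.2 (Fin.last k)) - 1 := by
  simp [unrotate]

theorem unrotate_rotate (R : Room (k + 1)) : unrotate (rotate R) = R := by
  ext i <;> simp [unrotate, rotate]

theorem rotate_unrotate {R : Room (k + 1)} (hR : 0 < R.1 (R.2 (Fin.last k))) :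
    rotate (unrotate R) = R := by
  ext i
  · rw [rotate, unrotate_snd_zero]
    simp only [unrotate, Pi.add_apply, Pi.sub_apply, Pi.single_apply]
    split_ifs with hi <;> [subst hi; skip] <;> omega
  · simp [unrotate, rotate]

theorem rotate_mem_rooms {R : Room (k + 1)} (hR : R ∈ rooms p (k + 1))
    (h : R.1 (R.2 0) + 1 < p) : rotate R ∈ rooms p (k + 1) := by
  rw [mem_rooms] at hR ⊢
  intro i
  simp only [rotate, Pi.add_apply, Pi.single_apply]
  split_ifs with hi
  · exact hi ▸ h
  · exact hR i

theorem unrotate_mem_rooms {R : Room (k + 1)} (hR : R ∈ rooms p (k + 1)) :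
    unrotate R ∈ rooms p (k + 1) := by
  rw [mem_rooms] at hR ⊢
  exact fun i => (Nat.sub_le _ _).trans_lt (hR i)

theorem vertex_rotate (R : Room (k + 1)) (j : Fin (k + 1)) :
    vertex (rotate R) j.castSucc = vertex R j.succ := by
  funext i
  obtain ⟨u, rfl⟩ := R.2.surjective i
  simp only [vertex, rotate, mul_inv_rev, Equiv.Perm.mul_apply, Equiv.Perm.coe_inv,
    Equiv.symm_apply_apply, Pi.add_apply, Pi.single_apply, R.2.injective.eq_iff]
  rcases eq_or_ne u 0 with rfl | hu
  · have : (finRotate (k + 1)).symm 0 = Fin.last k := by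
      rw [Equiv.symm_apply_eq, finRotate_last]
    simp [this, Fin.le_last, not_lt_of_ge]
  · have := coe_finRotate_symm_of_ne_zero hu
    have := Fin.pos_iff_ne_zero.2 hu
    simp only [hu, if_false, Fin.lt_def, Fin.val_succ, Fin.val_castSucc] at *
    split_ifs <;> omega

theorem vertex_swap (b : Fin (k + 1) → ℕ) (π : Equiv.Perm (Fin (k + 1))) (a : Fin k)
    {t : Fin (k + 2)} (ht : t ≠ a.castSucc.succ) :
    vertex (b, π * Equiv.swap a.castSucc a.succ) t = vertex (b, π) t := by
  have ht : (t : ℕ) ≠ a + 1 := fun h => ht (Fin.ext h)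
  funext i
  obtain ⟨u, rfl⟩ := π.surjective i
  simp only [vertex, mul_inv_rev, Equiv.swap_inv, Equiv.Perm.mul_apply, Equiv.Perm.coe_inv,
    Equiv.symm_apply_apply]
  congr 1
  rcases eq_or_ne u a.castSucc with rfl | h1
  · simp only [Equiv.swap_apply_left, Fin.lt_def, Fin.val_castSucc, Fin.val_succ]
    split_ifs <;> omega
  rcases eq_or_ne u a.succ with rfl | h2
  · simp only [Equiv.swap_apply_right, Fin.lt_def, Fin.val_castSucc, Fin.val_succ]
    split_ifs <;> omega
  · rw [Equiv.swap_apply_of_ne_of_ne h1 h2]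

def extendPerm (σ : Equiv.Perm (Fin k)) : Equiv.Perm (Fin (k + 1)) :=
  finSuccEquivLast.permCongr.symm σ.optionCongr

def restrictPerm (π : Equiv.Perm (Fin (k + 1))) : Equiv.Perm (Fin k) :=
  Equiv.removeNone (finSuccEquivLast.permCongr π)

@[simp] theorem extendPerm_castSucc (σ : Equiv.Perm (Fin k)) (a : Fin k) :
    extendPerm σ a.castSucc = (σ a).castSucc := by
  simp [extendPerm, Equiv.permCongr_symm, Equiv.permCongr_apply]

@[simp] theorem extendPerm_last (σ : Equiv.Perm (Fin k)) :
    extendPerm σ (Fin.last k) = Fin.last k := by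
  simp [extendPerm, Equiv.permCongr_symm, Equiv.permCongr_apply]

theorem restrictPerm_extendPerm (σ : Equiv.Perm (Fin k)) : restrictPerm (extendPerm σ) = σ := by
  rw [restrictPerm, extendPerm, Equiv.apply_symm_apply, Equiv.removeNone_optionCongr]

theorem extendPerm_restrictPerm {π : Equiv.Perm (Fin (k + 1))} (h : π (Fin.last k) = Fin.last k) :
    extendPerm (restrictPerm π) = π := by
  rw [extendPerm, restrictPerm, Equiv.optionCongr_removeNone, Equiv.symm_apply_apply]
  simp [Equiv.permCongr_apply, h]

def lift (R : Room k) : Room (k + 1) := (Fin.snoc R.1 0, extendPerm R.2)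

def restrict (R : Room (k + 1)) : Room k := (Fin.init R.1, restrictPerm R.2)

theorem restrict_lift (R : Room k) : restrict (lift R) = R := by
  simp [restrict, lift, restrictPerm_extendPerm]

theorem lift_restrict {R : Room (k + 1)} (h₁ : R.1 (Fin.last k) = 0)
    (h₂ : R.2 (Fin.last k) = Fin.last k) : lift (restrict R) = R := by
  rw [lift, restrict, ← h₁, Fin.snoc_init_self, extendPerm_restrictPerm h₂]

theorem vertex_lift (R : Room k) (j : Fin (k + 1)) :
    vertex (lift R) j.castSucc = Fin.snoc (vertex R j) 0 := by
  funext i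
  obtain ⟨u, rfl⟩ := (extendPerm R.2).surjective i
  simp only [vertex, lift, Equiv.Perm.coe_inv, Equiv.symm_apply_apply]
  induction u using Fin.lastCases with
  | last => simp [Fin.le_last, not_lt_of_ge]
  | cast a => simp [vertex]

structure IsSpernerLabeling (p : ℕ) (ℓ : (Fin n → ℕ) → ℕ) : Prop where
  le : ∀ x, (∀ i, x i ≤ p) → ℓ x ≤ n
  le_of_eq_zero : ∀ x, (∀ i, x i ≤ p) → ∀ i : Fin n, x i = 0 → ℓ x ≤ i
  ne_of_eq : ∀ x, (∀ i, x i ≤ p) → ∀ i : Fin n, x i = p → ℓ x ≠ i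

theorem IsSpernerLabeling.snoc {ℓ : (Fin (k + 1) → ℕ) → ℕ} (h : IsSpernerLabeling p ℓ) :
    IsSpernerLabeling p fun z : Fin k → ℕ => ℓ (Fin.snoc z 0) := by
  have hsnoc {z : Fin k → ℕ} (hz : ∀ i, z i ≤ p) :
      ∀ i, (Fin.snoc z 0 : Fin (k + 1) → ℕ) i ≤ p :=
    Fin.lastCases (by simp) (by simpa using hz)
  refine ⟨fun z hz => ?_, fun z hz i hi => ?_, fun z hz i hi => ?_⟩
  · simpa using h.le_of_eq_zero _ (hsnoc hz) (Fin.last k) (by simp)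
  · simpa using h.le_of_eq_zero _ (hsnoc hz) i.castSucc (by simpa using hi)
  · simpa using h.ne_of_eq _ (hsnoc hz) i.castSucc (by simpa using hi)

def IsFullyLabeled (ℓ : (Fin n → ℕ) → ℕ) (R : Room n) : Prop :=
  univ.image (fun j => ℓ (vertex R j)) = range (n + 1)

/-- The facet of `R` opposite to its vertex `j` carries all the labels `0, …, n - 1`. -/
def IsDoor (ℓ : (Fin n → ℕ) → ℕ) (R : Room n) (j : Fin (n + 1)) : Prop :=
  ({j}ᶜ : Finset (Fin (n + 1))).image (fun t => ℓ (vertex R t)) = range n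

instance (ℓ : (Fin n → ℕ) → ℕ) (R : Room n) : Decidable (IsFullyLabeled ℓ R) :=
  inferInstanceAs (Decidable (_ = _))

instance (ℓ : (Fin n → ℕ) → ℕ) (R : Room n) (j : Fin (n + 1)) :
    Decidable (IsDoor ℓ R j) :=
  inferInstanceAs (Decidable (_ = _))

variable {ℓ : (Fin (k + 1) → ℕ) → ℕ}

theorem isDoor_rotate_last (R : Room (k + 1)) :
    IsDoor ℓ (rotate R) (Fin.last (k + 1)) ↔ IsDoor ℓ R 0 := by
  rw [IsDoor, IsDoor, ← Fin.image_castSucc, ← Fin.image_succ_univ, image_image, image_image]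
  simp only [Function.comp_def, vertex_rotate]

theorem isDoor_unrotate_zero {R : Room (k + 1)} (hR : 0 < R.1 (R.2 (Fin.last k))) :
    IsDoor ℓ (unrotate R) 0 ↔ IsDoor ℓ R (Fin.last (k + 1)) := by
  rw [← isDoor_rotate_last, rotate_unrotate hR]

theorem isDoor_swap (b : Fin (k + 1) → ℕ) (π : Equiv.Perm (Fin (k + 1))) (a : Fin k) :
    IsDoor ℓ (b, π * Equiv.swap a.castSucc a.succ) a.castSucc.succ ↔
      IsDoor ℓ (b, π) a.castSucc.succ := by
  rw [IsDoor, IsDoor, image_congr fun t ht => by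
    rw [vertex_swap b π a (by simpa using ht)]]

theorem isDoor_lift_last (R : Room k) :
    IsDoor ℓ (lift R) (Fin.last (k + 1)) ↔ IsFullyLabeled (fun z => ℓ (Fin.snoc z 0)) R := by
  rw [IsDoor, IsFullyLabeled, ← Fin.image_castSucc, image_image]
  simp only [Function.comp_def, vertex_lift]

@[elab_as_elim]
def pivotCases {motive : Fin (k + 2) → Sort*} (zero : motive 0) (last : motive (Fin.last (k + 1)))
    (mid : ∀ a : Fin k, motive a.castSucc.succ) (j : Fin (k + 2)) : motive j :=
  Fin.cases zero (Fin.lastCases (motive := fun i => motive i.succ) last mid) j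

/-- The door-to-door move of the path-following argument: cross the door `x.2` of the room
`x.1` into the adjacent room, unless the door lies on the boundary of the grid. -/
def pivot (p : ℕ) (x : Room (k + 1) × Fin (k + 2)) : Room (k + 1) × Fin (k + 2) :=
  pivotCases (motive := fun _ => Room (k + 1) × Fin (k + 2))
    (if x.1.1 (x.1.2 0) + 1 < p then (rotate x.1, Fin.last (k + 1)) else x)
    (if 0 < x.1.1 (x.1.2 (Fin.last k)) then (unrotate x.1, 0) else x)
    (fun a => ((x.1.1, x.1.2 * Equiv.swap a.castSucc a.succ), a.castSucc.succ)) x.2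

theorem pivot_zero (R : Room (k + 1)) :
    pivot p (R, 0) = if R.1 (R.2 0) + 1 < p then (rotate R, Fin.last (k + 1)) else (R, 0) :=
  rfl

theorem pivot_last (R : Room (k + 1)) :
    pivot p (R, Fin.last (k + 1)) =
      if 0 < R.1 (R.2 (Fin.last k)) then (unrotate R, 0) else (R, Fin.last (k + 1)) := by
  simp [pivot, pivotCases, ← Fin.succ_last]

theorem pivot_mid (b : Fin (k + 1) → ℕ) (π : Equiv.Perm (Fin (k + 1))) (a : Fin k) :
    pivot p ((b, π), a.castSucc.succ) =
      ((b, π * Equiv.swap a.castSucc a.succ), a.castSucc.succ) := by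
  simp [pivot, pivotCases]

def doors (p : ℕ) (ℓ : (Fin n → ℕ) → ℕ) : Finset (Room n × Fin (n + 1)) :=
  {x ∈ rooms p n ×ˢ univ | IsDoor ℓ x.1 x.2}

theorem mem_doors {ℓ : (Fin n → ℕ) → ℕ} {x : Room n × Fin (n + 1)} :
    x ∈ doors p ℓ ↔ x.1 ∈ rooms p n ∧ IsDoor ℓ x.1 x.2 := by
  simp [doors]

theorem card_doors (ℓ : (Fin n → ℕ) → ℕ) :
    #(doors p ℓ) = ∑ R ∈ rooms p n, #{j | IsDoor ℓ R j} := by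
  simp only [doors, card_filter, sum_product]

theorem pivot_mem_doors {x : Room (k + 1) × Fin (k + 2)} (hx : x ∈ doors p ℓ) :
    pivot p x ∈ doors p ℓ := by
  obtain ⟨⟨b, π⟩, j⟩ := x
  obtain ⟨hR, hdoor⟩ := mem_doors.1 hx
  rw [mem_doors]
  induction j using pivotCases with
  | zero =>
    rw [pivot_zero]
    split_ifs with h
    · exact ⟨rotate_mem_rooms hR h, (isDoor_rotate_last _).2 hdoor⟩
    · exact ⟨hR, hdoor⟩
  | last =>
    rw [pivot_last]
    split_ifs with h
    · exact ⟨unrotate_mem_rooms hR, (isDoor_unrotate_zero h).2 hdoor⟩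
    · exact ⟨hR, hdoor⟩
  | mid a =>
    rw [pivot_mid]
    exact ⟨mem_rooms.2 (mem_rooms.1 hR : ∀ i, b i < p), (isDoor_swap b π a).2 hdoor⟩

theorem pivot_pivot {x : Room (k + 1) × Fin (k + 2)} (hx : x.1 ∈ rooms p (k + 1)) :
    pivot p (pivot p x) = x := by
  obtain ⟨R, j⟩ := x
  induction j using pivotCases with
  | zero =>
    rw [pivot_zero]
    split_ifs with h
    · rw [pivot_last, rotate_snd_last, rotate_fst_self, if_pos (Nat.succ_pos _), unrotate_rotate]
    · rw [pivot_zero, if_neg h]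
  | last =>
    rw [pivot_last]
    split_ifs with h
    · have : R.1 (R.2 (Fin.last k)) < p := mem_rooms.1 hx _
      rw [pivot_zero, unrotate_snd_zero, unrotate_fst_self, if_pos (by omega), rotate_unrotate h]
    · rw [pivot_last, if_neg h]
  | mid a => rw [pivot_mid, pivot_mid, mul_assoc, Equiv.swap_mul_self, mul_one]

theorem not_isDoor_zero (hℓ : IsSpernerLabeling p ℓ) {R : Room (k + 1)}
    (hR : R ∈ rooms p (k + 1)) (h : ¬R.1 (R.2 0) + 1 < p) : ¬IsDoor ℓ R 0 := by
  intro hdoor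
  obtain ⟨t, ht, hlabel⟩ := mem_image.1 (hdoor ▸ mem_range.2 (R.2 0).isLt)
  have hvertex : vertex R t (R.2 0) = p := by
    have : R.1 (R.2 0) < p := mem_rooms.1 hR _
    have : (0 : Fin (k + 1)).castSucc < t := Fin.pos_iff_ne_zero.2 (by simpa using ht)
    simp only [vertex, Equiv.Perm.coe_inv, Equiv.symm_apply_apply, if_pos this]
    omega
  exact hℓ.ne_of_eq _ (vertex_le hR t) _ hvertex hlabel

theorem snd_last_of_isDoor_last (hℓ : IsSpernerLabeling p ℓ) {R : Room (k + 1)}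
    (hR : R ∈ rooms p (k + 1)) (h : R.1 (R.2 (Fin.last k)) = 0)
    (hdoor : IsDoor ℓ R (Fin.last (k + 1))) : R.2 (Fin.last k) = Fin.last k := by
  obtain ⟨t, ht, hlabel⟩ := mem_image.1 (hdoor ▸ self_mem_range_succ k)
  have hvertex : vertex R t (R.2 (Fin.last k)) = 0 := by
    have : ¬(Fin.last k).castSucc < t := by
      rw [Fin.castSucc_lt_iff_succ_le, Fin.succ_last, not_le]
      exact Fin.lt_last_iff_ne_last.2 (by simpa using ht)
    simp [vertex, h, this]
  have := hℓ.le_of_eq_zero _ (vertex_le hR t) _ hvertex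
  rw [hlabel] at this
  exact Fin.ext (le_antisymm (Fin.is_le _) this)

theorem pivot_eq_self_iff (hℓ : IsSpernerLabeling p ℓ) {x : Room (k + 1) × Fin (k + 2)}
    (hx : x ∈ doors p ℓ) : pivot p x = x ↔
      x.2 = Fin.last (k + 1) ∧ x.1.2 (Fin.last k) = Fin.last k ∧ x.1.1 (Fin.last k) = 0 := by
  obtain ⟨⟨b, π⟩, j⟩ := x
  obtain ⟨hR, hdoor⟩ := mem_doors.1 hx
  induction j using pivotCases with
  | zero =>
    rw [pivot_zero]
    split_ifs with h
    · simp
    · exact absurd hdoor (not_isDoor_zero hℓ hR h)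
  | last =>
    rw [pivot_last]
    split_ifs with h
    · refine iff_of_false (by simp) ?_
      rintro ⟨-, hπ, hb⟩
      simp_all
    · have hπ := snd_last_of_isDoor_last hℓ hR (Nat.eq_zero_of_not_pos h) hdoor
      simp_all
  | mid a =>
    rw [pivot_mid]
    refine iff_of_false (fun h => ?_) fun h => ?_
    · have := congrArg (fun y => y.1.2 a.castSucc) h
      simp only [Equiv.Perm.mul_apply, Equiv.swap_apply_left, π.injective.eq_iff] at this
      exact (Fin.castSucc_lt_succ (i := a)).ne' this
    · have := congrArg Fin.val h.1
      simp only [Fin.val_succ, Fin.val_castSucc, Fin.val_last] at this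
      omega

theorem card_filter_pivot_eq_self (hp : 0 < p) (hℓ : IsSpernerLabeling p ℓ) :
    #{x ∈ doors p ℓ | pivot p x = x} =
      #{R ∈ rooms p k | IsFullyLabeled (fun z => ℓ (Fin.snoc z 0)) R} := by
  refine card_bij' (fun x _ => restrict x.1) (fun R _ => (lift R, Fin.last (k + 1)))
    (fun x hx => ?_) (fun R hR => ?_) (fun x hx => ?_) (fun R _ => restrict_lift R)
  · obtain ⟨hx, hfix⟩ := mem_filter.1 hx
    obtain ⟨hj, hπ, hb⟩ := (pivot_eq_self_iff hℓ hx).1 hfix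
    obtain ⟨hR, hdoor⟩ := mem_doors.1 hx
    rw [hj, ← lift_restrict hb hπ, isDoor_lift_last] at hdoor
    refine mem_filter.2 ⟨mem_rooms.2 fun i => ?_, hdoor⟩
    exact mem_rooms.1 hR i.castSucc
  · obtain ⟨hR, hfull⟩ := mem_filter.1 hR
    have hx : (lift R, Fin.last (k + 1)) ∈ doors p ℓ := by
      refine mem_doors.2 ⟨mem_rooms.2 fun i => ?_, (isDoor_lift_last R).2 hfull⟩
      induction i using Fin.lastCases with
      | last => simpa [lift] using hp
      | cast i => simpa [lift] using mem_rooms.1 hR i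
    exact mem_filter.2 ⟨hx, (pivot_eq_self_iff hℓ hx).2 ⟨rfl, by simp [lift]⟩⟩
  · obtain ⟨hx, hfix⟩ := mem_filter.1 hx
    obtain ⟨hj, hπ, hb⟩ := (pivot_eq_self_iff hℓ hx).1 hfix
    rw [lift_restrict hb hπ, ← hj]

theorem odd_card_isFullyLabeled_zero (ℓ : (Fin 0 → ℕ) → ℕ)
    (hℓ : IsSpernerLabeling p ℓ) :
    Odd #{R ∈ rooms p 0 | IsFullyLabeled ℓ R} := by
  rw [filter_true_of_mem fun R _ => ?_]
  · simp [rooms]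
  · simp [IsFullyLabeled, fun x => Nat.le_zero.1 (hℓ.le x fun i => i.elim0)]

/-- **Kuhn's cubical Sperner lemma.** -/
theorem odd_card_isFullyLabeled (hp : 0 < p) :
    ∀ {n} (ℓ : (Fin n → ℕ) → ℕ), IsSpernerLabeling p ℓ →
      Odd #{R ∈ rooms p n | IsFullyLabeled ℓ R}
  | 0, ℓ, hℓ => odd_card_isFullyLabeled_zero ℓ hℓ
  | k + 1, ℓ, hℓ => by
    have hdoors : ∀ R ∈ rooms p (k + 1), Odd #{j | IsDoor ℓ R j} ↔ IsFullyLabeled ℓ R :=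
      fun R hR => odd_card_filter_image_compl_eq_range_iff fun j => hℓ.le _ (vertex_le hR j)
    have hpivot := card_modEq_card_filter_eq_self (doors p ℓ) (pivot p)
      (fun x => pivot_mem_doors) (fun x hx => pivot_pivot (mem_doors.1 hx).1)
    rw [← filter_congr hdoors, ← odd_sum_iff_odd_card_odd, ← card_doors, Nat.odd_iff, hpivot,
      ← Nat.odd_iff, card_filter_pivot_eq_self hp hℓ]
    exact odd_card_isFullyLabeled hp _ hℓ.snoc

end Kuhn

section Brouwer

variable {n : ℕ} (g : (Fin n → ℝ) → Fin n → ℝ)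

noncomputable def gridPoint (p : ℕ) (z : Fin n → ℕ) : Fin n → ℝ := fun i => z i / p

open Classical in
/-- Label `i < n` says that `g` does not decrease coordinate `i` (or that it vanishes), label `n`
that `g` decreases every coordinate below the top face. -/
noncomputable def cubeLabel (p : ℕ) (z : Fin n → ℕ) : Fin (n + 1) :=
  firstIndex fun i => z i = 0 ∨ z i < p ∧ gridPoint p z i ≤ g (gridPoint p z) i

def labelSet (c : Fin (n + 1)) : Set (Fin n → ℝ) :=
  Fin.lastCases {y ∈ Set.Icc 0 1 | g y ≤ y} (fun i => {y ∈ Set.Icc 0 1 | y i ≤ g y i}) c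

@[simp] theorem labelSet_last : labelSet g (Fin.last n) = {y ∈ Set.Icc 0 1 | g y ≤ y} :=
  Fin.lastCases_last

@[simp] theorem labelSet_castSucc (i : Fin n) :
    labelSet g i.castSucc = {y ∈ Set.Icc 0 1 | y i ≤ g y i} :=
  Fin.lastCases_castSucc i

theorem isSpernerLabeling_cubeLabel {p : ℕ} (hp : 0 < p) :
    Kuhn.IsSpernerLabeling p fun z => (cubeLabel g p z : ℕ) := by
  refine ⟨fun z _ => Fin.is_le _, fun z _ i hi => firstIndex_le (Or.inl hi), ?_⟩
  intro z _ i hi hlabel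
  obtain h | h := apply_of_firstIndex_eq (Fin.ext hlabel : cubeLabel g p z = i.castSucc) <;> omega

theorem gridPoint_mem_Icc {p : ℕ} {z : Fin n → ℕ} (hz : ∀ i, z i ≤ p) :
    gridPoint p z ∈ Set.Icc 0 1 :=
  ⟨fun i => show (0 : ℝ) ≤ z i / p by positivity,
    fun i => div_le_one_of_le₀ (Nat.cast_le.2 (hz i)) p.cast_nonneg⟩

theorem dist_gridPoint_vertex_le {p : ℕ} (hp : 0 < p) (R : Kuhn.Room n) (j j' : Fin (n + 1)) :
    dist (gridPoint p (Kuhn.vertex R j)) (gridPoint p (Kuhn.vertex R j')) ≤ 1 / p := by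
  refine (dist_pi_le_iff (by positivity)).2 fun i => ?_
  rw [gridPoint, gridPoint, Real.dist_eq, ← sub_div, abs_div, Nat.abs_cast,
    div_le_div_iff_of_pos_right (by positivity), abs_le]
  simp only [Kuhn.vertex]
  constructor <;> split_ifs <;> push_cast <;> linarith

variable {g}

theorem isClosed_labelSet (hg : ContinuousOn g (Set.Icc 0 1)) (c : Fin (n + 1)) :
    IsClosed (labelSet g c) := by
  induction c using Fin.lastCases with
  | last => simpa using isClosed_Icc.isClosed_le hg continuousOn_id
  | cast i =>
    have hi : Continuous fun y : Fin n → ℝ => y i := continuous_apply i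
    simpa using isClosed_Icc.isClosed_le hi.continuousOn (hi.comp_continuousOn hg)

theorem gridPoint_mem_labelSet (hmaps : Set.MapsTo g (Set.Icc 0 1) (Set.Icc 0 1)) {p : ℕ}
    (hp : 0 < p) {z : Fin n → ℕ} (hz : ∀ i, z i ≤ p) :
    gridPoint p z ∈ labelSet g (cubeLabel g p z) := by
  have hy := gridPoint_mem_Icc hz
  obtain ⟨i, hi⟩ | hlast := Fin.eq_castSucc_or_eq_last (cubeLabel g p z)
  · rw [hi, labelSet_castSucc]
    refine ⟨hy, ?_⟩
    obtain hzero | ⟨-, hle⟩ := apply_of_firstIndex_eq hi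
    · simpa [gridPoint, hzero] using (hmaps hy).1 i
    · exact hle
  · rw [hlast, labelSet_last]
    refine ⟨hy, fun i => ?_⟩
    have := not_apply_of_firstIndex_eq_last hlast i
    rcases (hz i).lt_or_eq with hlt | heq
    · push Not at this
      exact (this.2 hlt).le
    · have : gridPoint p z i = 1 := by simp [gridPoint, heq, hp.ne']
      exact this ▸ (hmaps hy).2 i

theorem exists_forall_exists_mem_labelSet_dist_le
    (hmaps : Set.MapsTo g (Set.Icc 0 1) (Set.Icc 0 1)) {p : ℕ} (hp : 0 < p) :
    ∃ x ∈ Set.Icc 0 1, ∀ c, ∃ y ∈ labelSet g c, dist x y ≤ 1 / p := by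
  obtain ⟨R, hR⟩ := card_pos.1 (Kuhn.odd_card_isFullyLabeled hp _
    (isSpernerLabeling_cubeLabel g hp)).pos
  obtain ⟨hR, hfull⟩ := mem_filter.1 hR
  have hz := Kuhn.vertex_le hR
  refine ⟨gridPoint p (Kuhn.vertex R 0), gridPoint_mem_Icc (hz 0), fun c => ?_⟩
  obtain ⟨j, -, hj⟩ := mem_image.1 (hfull ▸ mem_range.2 c.isLt)
  exact ⟨_, Fin.ext hj ▸ gridPoint_mem_labelSet hmaps hp (hz j),
    dist_gridPoint_vertex_le hp R 0 j⟩

theorem exists_fixedPoint_cube (hg : ContinuousOn g (Set.Icc 0 1))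
    (hmaps : Set.MapsTo g (Set.Icc 0 1) (Set.Icc 0 1)) :
    ∃ x ∈ Set.Icc (0 : Fin n → ℝ) 1, g x = x := by
  obtain ⟨x, hx, hxF⟩ := isCompact_Icc.exists_forall_mem_of_forall_exists_dist_le
    (isClosed_labelSet hg) fun ε hε => by
      obtain ⟨m, hm⟩ := exists_nat_one_div_lt hε
      obtain ⟨x, hx, h⟩ := exists_forall_exists_mem_labelSet_dist_le hmaps m.succ_pos
      refine ⟨x, hx, fun c => ?_⟩
      obtain ⟨y, hy, hxy⟩ := h c
      exact ⟨y, hy, hxy.trans (by exact_mod_cast hm.le)⟩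
  have hle := hxF (Fin.last n)
  have hge := fun i : Fin n => hxF i.castSucc
  simp only [labelSet_last, labelSet_castSucc] at hle hge
  exact ⟨x, hx, le_antisymm hle.2 fun i => (hge i).2⟩

end Brouwer

section Retraction

variable {ι : Type*} [Fintype ι]

noncomputable def toStdSimplex (x : ι → ℝ) : ι → ℝ :=
  fun i => (x i)⁺ / max (∑ j, (x j)⁺) 1 + (1 - ∑ j, (x j)⁺)⁺ / Fintype.card ι

theorem continuous_toStdSimplex : Continuous (toStdSimplex (ι := ι)) := by
  refine continuous_pi fun i => ?_
  unfold toStdSimplex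
  refine Continuous.add (Continuous.div (by fun_prop) (by fun_prop) fun x => ?_) (by fun_prop)
  exact (zero_lt_one.trans_le (le_max_right _ _)).ne'

theorem toStdSimplex_mem [Nonempty ι] (x : ι → ℝ) : toStdSimplex x ∈ stdSimplex ℝ ι := by
  set s := ∑ j, (x j)⁺ with hs
  have hs0 : 0 ≤ s := sum_nonneg fun j _ => posPart_nonneg _
  have hcard : (0 : ℝ) < Fintype.card ι := by exact_mod_cast Fintype.card_pos
  refine ⟨fun i => by unfold toStdSimplex; positivity, ?_⟩
  simp only [toStdSimplex, sum_add_distrib, ← sum_div, ← hs, sum_const, card_univ, nsmul_eq_mul]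
  rcases le_or_gt s 1 with h | h
  · rw [max_eq_right h, posPart_eq_self.2 (sub_nonneg.2 h)]
    field_simp
    ring
  · rw [max_eq_left h.le, posPart_eq_zero.2 (sub_nonpos.2 h.le), div_self (by positivity)]
    simp

theorem toStdSimplex_eq_self {x : ι → ℝ} (hx : x ∈ stdSimplex ℝ ι) :
    toStdSimplex x = x := by
  have hpos : ∀ j, (x j)⁺ = x j := fun j => posPart_eq_self.2 (hx.1 j)
  funext i
  simp [toStdSimplex, hpos, hx.2]

theorem exists_fixedPoint_stdSimplex {n : ℕ} [NeZero n]
    (g : stdSimplex ℝ (Fin n) → stdSimplex ℝ (Fin n)) (hg : Continuous g) :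
    ∃ x, g x = x := by
  let r : (Fin n → ℝ) → stdSimplex ℝ (Fin n) := fun x =>
    ⟨toStdSimplex x, toStdSimplex_mem x⟩
  have hr : Continuous r := continuous_toStdSimplex.subtype_mk _
  obtain ⟨x, -, hx⟩ := exists_fixedPoint_cube (g := fun x => g (r x))
    (continuous_subtype_val.comp (hg.comp hr)).continuousOn
    fun x _ => stdSimplex_subset_Icc ℝ (g (r x)).2
  have hrx : toStdSimplex x = x := toStdSimplex_eq_self (hx ▸ (g (r x)).2)
  exact ⟨r x, Subtype.ext (hx.trans hrx.symm)⟩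

end Retraction

/-- There is no continuous map from the standard simplex
`Δ = {x : Fin n → ℝ | (∀ i, x i ≥ 0) ∧ ∑ i, x i = 1}` to its boundary
`∂Δ = {x ∈ Δ | ∃ i, x i = 0}` mapping each proper face into itself
(a continuous version of Sperner's lemma). -/
theorem no_continuous_retraction_to_boundary (n : ℕ) (hn : 1 ≤ n) :
    ¬ ∃ f : {x : Fin n → ℝ // (∀ i, 0 ≤ x i) ∧ ∑ i, x i = 1} → (Fin n → ℝ),
        Continuous f ∧
        (∀ x, (∀ i, 0 ≤ f x i) ∧ ∑ i, f x i = 1) ∧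
        (∀ x, ∃ i, f x i = 0) ∧
        (∀ x (i : Fin n), x.1 i = 0 → f x i = 0) := by
  rintro ⟨f, hf, hmaps, hzero, hface⟩
  have : NeZero n := ⟨by omega⟩
  let g : stdSimplex ℝ (Fin n) → stdSimplex ℝ (Fin n) := fun x =>
    ⟨fun i => f x (i + 1), fun i => (hmaps x).1 _,
      (Equiv.sum_comp (Equiv.addRight 1) (f x)).trans (hmaps x).2⟩
  obtain ⟨x, hx⟩ := exists_fixedPoint_stdSimplex g
    ((continuous_pi fun i => (continuous_apply _).comp hf).subtype_mk _)
  have hshift : ∀ i, x.1 i = f x (i + 1) := fun i => congrFun (congrArg Subtype.val hx.symm) i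
  obtain ⟨i₀, hi₀⟩ := hzero x
  have hall := Fin.forall_of_imp_of_add_one (fun i hi => hface x i ((hshift i).trans hi)) hi₀
  simpa [hall] using (hmaps x).2
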